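/- Let μ > 0 with μ ≠ 1, and define F(x,y) = x²·y^(−2/μ) − y^(2−2/μ)/(μ−1) on the open upper half-plane {y > 0}. Then F is a first integral of the system ẋ = x² + y², ẏ = μxy: for all x ∈ ℝ and y > 0, (x² + y²)·∂F/∂x(x,y) + μxy·∂F/∂y(x,y) = 0. In particular, for each a ∈ ℝ the curve {x² = a·y^(2/μ) + y²/(μ−1)} is invariant under the phase flow of the system in {y > 0}. -/

import Mathlib

/-!
Along a solution `(x(t), y(t))` the derivative of `F` is the gradient of `F` applied to the vector
field. Since `(2 - 2/μ)/(μ - 1) = 2/μ`, the gradient is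
`(2x y^(-2/μ), -(2/μ)(x² + y²) y^(-2/μ-1))`, and pairing it with `(x² + y², μxy)` gives
`2x(x² + y²) y^(-2/μ) - 2x(x² + y²) y^(-2/μ) = 0`. Hence `F` is constant along solutions, and
multiplying `F(x, y) = a` by `y^(2/μ) > 0` turns the level set into `x² = a y^(2/μ) + y²/(μ - 1)`.
-/

open Real

/-- `F(x,y) = x² y^(−2/μ) − y^(2−2/μ)/(μ−1)` on `{y > 0}`. -/
noncomputable def F (μ x y : ℝ) : ℝ :=
  x ^ 2 * y ^ (-2 / μ) - y ^ (2 - 2 / μ) / (μ - 1)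

open ContinuousLinearMap

noncomputable def gradF (μ : ℝ) (p : ℝ × ℝ) : ℝ × ℝ →L[ℝ] ℝ :=
  (2 * p.1 * p.2 ^ (-2 / μ)) • fst ℝ ℝ ℝ -
    (2 / μ * (p.1 ^ 2 + p.2 ^ 2) * p.2 ^ (-2 / μ - 1)) • snd ℝ ℝ ℝ

lemma rpow_two_sub {y : ℝ} (hy : 0 < y) (r : ℝ) : y ^ (2 - r) = y ^ 2 * y ^ (-r) := by
  rw [sub_eq_add_neg, rpow_add hy, rpow_two]

lemma hasFDerivAt_F {μ : ℝ} (hμ : μ ≠ 0) (hμ1 : μ ≠ 1) {p : ℝ × ℝ} (hp : 0 < p.2) :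
    HasFDerivAt (fun q : ℝ × ℝ => F μ q.1 q.2) (gradF μ p) p := by
  have h := ((hasFDerivAt_fst.pow 2).mul (hasFDerivAt_snd.rpow_const (p := -2 / μ)
    (Or.inl hp.ne'))).sub ((hasFDerivAt_snd.rpow_const (p := 2 - 2 / μ)
      (Or.inl hp.ne')).mul_const (μ - 1)⁻¹)
  simp only [F, div_eq_mul_inv (_ ^ (2 - 2 / μ))]
  refine h.congr_fderiv (ContinuousLinearMap.ext fun v => ?_)
  simp only [gradF, sub_apply, add_apply, smul_apply, coe_fst', coe_snd', smul_eq_mul,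
    nsmul_eq_mul, rpow_sub_one hp.ne', rpow_two_sub hp, neg_div]
  field_simp [sub_ne_zero.mpr hμ1]
  ring

lemma gradF_apply_vectorField {μ : ℝ} (hμ : μ ≠ 0) {p : ℝ × ℝ} (hp : 0 < p.2) :
    gradF μ p (p.1 ^ 2 + p.2 ^ 2, μ * p.1 * p.2) = 0 := by
  simp only [gradF, sub_apply, smul_apply, coe_fst', coe_snd', smul_eq_mul, rpow_sub_one hp.ne']
  field_simp
  ring

lemma hasDerivAt_F_comp {μ : ℝ} (hμ : μ ≠ 0) (hμ1 : μ ≠ 1) {x y : ℝ → ℝ} {x' y' t : ℝ}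
    (hx : HasDerivAt x x' t) (hy : HasDerivAt y y' t) (hyt : 0 < y t) :
    HasDerivAt (fun s => F μ (x s) (y s)) (gradF μ (x t, y t) (x', y')) t :=
  (hasFDerivAt_F hμ hμ1 hyt).comp_hasDerivAt t (hx.prodMk hy)

lemma F_mul_rpow (μ x : ℝ) {y : ℝ} (hy : 0 < y) :
    F μ x y * y ^ (2 / μ) = x ^ 2 - y ^ 2 / (μ - 1) := by
  have h : y ^ (-2 / μ) * y ^ (2 / μ) = 1 := by
    rw [← rpow_add hy, neg_div, neg_add_cancel, rpow_zero]
  rw [F, rpow_two_sub hy, ← neg_div]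
  linear_combination (x ^ 2 - y ^ 2 / (μ - 1)) * h

lemma F_eq_iff (μ a x : ℝ) {y : ℝ} (hy : 0 < y) :
    F μ x y = a ↔ x ^ 2 = a * y ^ (2 / μ) + y ^ 2 / (μ - 1) := by
  rw [← mul_left_inj' (rpow_pos_of_pos hy (2 / μ)).ne', F_mul_rpow μ x hy, sub_eq_iff_eq_add]

theorem stmt17 (μ : ℝ) (hμ : 0 < μ) (hμ1 : μ ≠ 1) :
    (∀ x y : ℝ, 0 < y →
      (x ^ 2 + y ^ 2) * deriv (fun x' => F μ x' y) x +
        μ * x * y * deriv (fun y' => F μ x y') y = 0) ∧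
    (∀ a : ℝ, ∀ x y : ℝ → ℝ,
      (∀ t, HasDerivAt x (x t ^ 2 + y t ^ 2) t) →
      (∀ t, HasDerivAt y (μ * x t * y t) t) →
      (∀ t, 0 < y t) →
      ∀ t₀ : ℝ, x t₀ ^ 2 = a * y t₀ ^ (2 / μ) + y t₀ ^ 2 / (μ - 1) →
        ∀ t : ℝ, x t ^ 2 = a * y t ^ (2 / μ) + y t ^ 2 / (μ - 1)) := by
  refine ⟨fun x y hy => ?_, fun a x y hx hy hpos t₀ ht₀ t => ?_⟩
  · rw [(hasDerivAt_F_comp hμ.ne' hμ1 (hasDerivAt_id' x) (hasDerivAt_const x y) hy).deriv,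
      (hasDerivAt_F_comp hμ.ne' hμ1 (hasDerivAt_const y x) (hasDerivAt_id' y) hy).deriv]
    convert gradF_apply_vectorField hμ.ne' (p := (x, y)) hy using 1
    simp only [gradF, sub_apply, smul_apply, coe_fst', coe_snd', smul_eq_mul]
    ring
  · have hF_const : ∀ s, HasDerivAt (fun s => F μ (x s) (y s)) 0 s := fun s => by
      simpa only [gradF_apply_vectorField hμ.ne' (p := (x s, y s)) (hpos s)]
        using hasDerivAt_F_comp hμ.ne' hμ1 (hx s) (hy s) (hpos s)
    rw [← F_eq_iff μ a _ (hpos t), is_const_of_deriv_eq_zero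
      (fun s => (hF_const s).differentiableAt) (fun s => (hF_const s).deriv) t t₀,
      F_eq_iff μ a _ (hpos t₀)]
    exact ht₀
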